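/- Let G1 be a connected δ1-regular graph on n vertices with δ1 ≥ 4 and G2 be a connected δ2-regular graph on δ1 vertices, and write κ1 = κ(G1), λi = λ(Gi) for i = 1,2, and λ2' = λ'(G2). Then min{λ1, κ1+λ2−1, 2λ2, λ2'+2} ≤ λ'(G1®G2) ≤ min{λ1, 2δ2}. -/

import Mathlib

/-!
Every restricted edge-cut of `H = G1 ® G2` contains the boundary `∂X` of a set `X` in which every
vertex has a neighbour on its own side, so it suffices to bound `|∂X|` for such `X`. Call the copy
`{x} × V2` of `G2` split if `X` meets it without containing it; a split copy carries a cut of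
`G2`, hence at least `λ2` edges of `∂X`.
* No copy is split: `X` is a union of copies and `∂X` projects onto a cut of `G1`, so
  `|∂X| ≥ λ1`.
* Two copies are split: `|∂X| ≥ 2 λ2`.
* Only `x` is split and the other copies lie on both sides: deleting `x` and one end of each edge
  of `G1` between the two sides disconnects `G1` (Whitney), so `|∂X| ≥ λ2 + κ1 - 1`.
* Otherwise `X` or its complement lies in the copy of `x`. Each of its vertices has a private edge
  to another copy, and its trace `S` on `G2` either is a side of a restricted edge-cut of `G2`
  with `|S| ≥ 2`, giving `λ2' + 2`, or contains a whole neighbourhood in `G2`, giving `2 λ2`.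

For the upper bounds, the copies over one side of a minimum edge-cut of `G1` give `λ1`, and since
`H` is `(δ2 + 1)`-regular, the edges leaving the two ends of any edge form a restricted edge-cut
of size `2 δ2`.
-/

open SimpleGraph

section Defs

variable {V : Type*}

/-- The set of edges of `G` with one endpoint in `X` and the other outside `X`. -/
def edgeBoundary (G : SimpleGraph V) (X : Set V) : Set (Sym2 V) :=
  {e | e ∈ G.edgeSet ∧ ∃ u ∈ X, ∃ v ∈ Xᶜ, e = s(u, v)}

/-- The edge-connectivity `λ(G)`: the minimum number of edges whose removal disconnects `G`. -/
noncomputable def edgeConn (G : SimpleGraph V) : ℕ :=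
  sInf {k | ∃ F : Set (Sym2 V), F ⊆ G.edgeSet ∧ F.ncard = k ∧ ¬(G.deleteEdges F).Connected}

/-- `F` is a restricted edge-cut of `G`: removing `F` disconnects `G` and leaves no
isolated vertices. -/
def IsRestrictedEdgeCut (G : SimpleGraph V) (F : Set (Sym2 V)) : Prop :=
  F ⊆ G.edgeSet ∧ ¬(G.deleteEdges F).Connected ∧ ∀ v : V, ∃ w : V, (G.deleteEdges F).Adj v w

/-- The restricted edge-connectivity `λ'(G)`. -/
noncomputable def restrictedEdgeConn (G : SimpleGraph V) : ℕ :=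
  sInf {k | ∃ F : Set (Sym2 V), IsRestrictedEdgeCut G F ∧ F.ncard = k}

/-- The vertex-connectivity `κ(G)`: the minimum size of a set of vertices whose removal
leaves a disconnected graph or a graph with at most one vertex. -/
noncomputable def vertexConn (G : SimpleGraph V) : ℕ :=
  sInf {k | ∃ S : Set V, S.ncard = k ∧
    (¬(G.induce (Sᶜ : Set V)).Connected ∨ (Sᶜ : Set V).ncard ≤ 1)}

/-- The minimum edge-degree `ξ(G) = min {d(u) + d(v) - 2 : uv ∈ E(G)}`. -/
noncomputable def minEdgeDegree (G : SimpleGraph V) : ℕ :=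
  sInf {k | ∃ u v : V, G.Adj u v ∧ (G.neighborSet u).ncard + (G.neighborSet v).ncard - 2 = k}

/-- `G` is `λ'`-optimal if `λ'(G) = ξ(G)`. -/
def LambdaPrimeOptimal (G : SimpleGraph V) : Prop :=
  restrictedEdgeConn G = minEdgeDegree G

/-- The replacement product of `G1` and `G2` with respect to an edge-labelling `ℓ`,
where `ℓ x i` is the other endpoint of the edge of `G1` labelled `i` at the vertex `x`.
Vertices `(x, i)` and `(y, j)` are adjacent iff either `x = y` and `i j ∈ E(G2)`, or
`x y ∈ E(G1)` and the edge `x y` is labelled `i` at `x` and `j` at `y`. -/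
def replacementProduct {V1 V2 : Type*} (G1 : SimpleGraph V1) (G2 : SimpleGraph V2)
    (ℓ : V1 → V2 → V1) : SimpleGraph (V1 × V2) where
  Adj p q := (p.1 = q.1 ∧ G2.Adj p.2 q.2) ∨
    (G1.Adj p.1 q.1 ∧ ℓ p.1 p.2 = q.1 ∧ ℓ q.1 q.2 = p.1)
  symm := by
    constructor
    rintro p q (⟨h1, h2⟩ | ⟨h1, h2, h3⟩)
    · exact Or.inl ⟨h1.symm, h2.symm⟩
    · exact Or.inr ⟨h1.symm, h3, h2⟩
  loopless := by
    constructor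
    rintro p (⟨_, h⟩ | ⟨h, _⟩)
    · exact G2.irrefl h
    · exact G1.irrefl h

/-- `ℓ` is a valid edge-labelling of `G1` for the replacement product:
for each vertex `x`, `ℓ x` is injective and `ℓ x i` is always a neighbour of `x`
(hence `ℓ x` enumerates the neighbours of `x` when `G1` is `|V2|`-regular). -/
def IsRPLabelling {V1 V2 : Type*} (G1 : SimpleGraph V1) (ℓ : V1 → V2 → V1) : Prop :=
  (∀ x, Function.Injective (ℓ x)) ∧ ∀ x i, G1.Adj x (ℓ x i)

end Defs

lemma Set.ncard_add_ncard_le_of_disjoint {α : Type*} [Finite α] {s t u : Set α}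
    (hst : Disjoint s t) (hs : s ⊆ u) (ht : t ⊆ u) : s.ncard + t.ncard ≤ u.ncard :=
  (Set.ncard_union_eq hst).symm.le.trans (Set.ncard_le_ncard (Set.union_subset hs ht))

section Cuts

variable {V : Type*} {G : SimpleGraph V} {X : Set V}

lemma edgeBoundary_compl : edgeBoundary G Xᶜ = edgeBoundary G X := by
  ext e
  constructor <;>
  · rintro ⟨he, u, hu, v, hv, rfl⟩
    exact ⟨he, v, by simpa using hv, u, by simpa using hu, Sym2.eq_swap⟩

lemma edgeBoundary_singleton (v : V) :
    edgeBoundary G {v} = (fun w => s(v, w)) '' G.neighborSet v := by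
  ext e
  constructor
  · rintro ⟨he, u, rfl, w, -, rfl⟩
    exact ⟨w, he, rfl⟩
  · rintro ⟨w, hw, rfl⟩
    exact ⟨hw, v, rfl, w, fun h => G.ne_of_adj hw h.symm, rfl⟩

lemma SimpleGraph.Connected.exists_adj_mem_notMem (hG : G.Connected) (hX : X.Nonempty)
    (hXc : Xᶜ.Nonempty) : ∃ u ∈ X, ∃ v ∉ X, G.Adj u v := by
  obtain ⟨u, hu⟩ := hX
  obtain ⟨v, hv⟩ := hXc
  obtain ⟨p⟩ := hG.preconnected u v
  obtain ⟨d, -, hd, hd'⟩ := p.exists_boundary_dart X hu hv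
  exact ⟨d.fst, hd, d.snd, hd', d.adj⟩

lemma not_connected_deleteEdges_edgeBoundary (hX : X.Nonempty) (hXc : Xᶜ.Nonempty) :
    ¬(G.deleteEdges (edgeBoundary G X)).Connected := fun hG => by
  obtain ⟨u, hu, v, hv, huv⟩ := hG.exists_adj_mem_notMem hX hXc
  rw [SimpleGraph.deleteEdges_adj] at huv
  exact huv.2 ⟨huv.1, u, hu, v, hv, rfl⟩

lemma edgeConn_le_ncard_edgeBoundary (hX : X.Nonempty) (hXc : Xᶜ.Nonempty) :
    edgeConn G ≤ (edgeBoundary G X).ncard :=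
  Nat.sInf_le ⟨_, fun _ he => he.1, rfl, not_connected_deleteEdges_edgeBoundary hX hXc⟩

lemma edgeConn_le_ncard_neighborSet [Nontrivial V] (v : V) :
    edgeConn G ≤ (G.neighborSet v).ncard := by
  obtain ⟨w, hw⟩ := exists_ne v
  calc edgeConn G ≤ (edgeBoundary G {v}).ncard :=
        edgeConn_le_ncard_edgeBoundary ⟨v, rfl⟩ ⟨w, hw⟩
    _ = (G.neighborSet v).ncard := by
        rw [edgeBoundary_singleton, Set.ncard_image_of_injective _ fun _ _ => Sym2.congr_right.1]

lemma exists_edgeBoundary_subset_of_not_connected [Nonempty V] {F : Set (Sym2 V)}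
    (hF : ¬(G.deleteEdges F).Connected) :
    ∃ X : Set V, X.Nonempty ∧ Xᶜ.Nonempty ∧ edgeBoundary G X ⊆ F := by
  obtain ⟨u, v, huv⟩ : ∃ u v, ¬(G.deleteEdges F).Reachable u v := by
    by_contra! h
    exact hF ⟨h⟩
  refine ⟨{w | (G.deleteEdges F).Reachable u w}, ⟨u, .refl u⟩, ⟨v, huv⟩, ?_⟩
  rintro _ ⟨he, a, ha, b, hb, rfl⟩
  by_contra heF
  exact hb (ha.trans (SimpleGraph.deleteEdges_adj.2 ⟨he, heF⟩).reachable)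

lemma exists_ncard_edgeBoundary_le_edgeConn [Finite V] [Nontrivial V] :
    ∃ X : Set V, X.Nonempty ∧ Xᶜ.Nonempty ∧ (edgeBoundary G X).ncard ≤ edgeConn G := by
  obtain ⟨u, v, huv⟩ := exists_pair_ne V
  obtain ⟨F, -, hFcard, hF⟩ := Nat.sInf_mem (s := {k | ∃ F : Set (Sym2 V), F ⊆ G.edgeSet ∧
      F.ncard = k ∧ ¬(G.deleteEdges F).Connected})
    ⟨_, _, fun _ he => he.1, rfl, not_connected_deleteEdges_edgeBoundary (X := {u}) ⟨u, rfl⟩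
      ⟨v, huv.symm⟩⟩
  obtain ⟨X, hX, hXc, hXF⟩ := exists_edgeBoundary_subset_of_not_connected hF
  exact ⟨X, hX, hXc, (Set.ncard_le_ncard hXF).trans hFcard.le⟩

lemma ncard_edgeBoundary_pair_add_two_le [Finite V] {u v : V} (huv : G.Adj u v) :
    (edgeBoundary G {u, v}).ncard + 2 ≤ (G.neighborSet u).ncard + (G.neighborSet v).ncard := by
  have hsub : edgeBoundary G {u, v} ⊆ (fun w => s(u, w)) '' (G.neighborSet u \ {v}) ∪
      (fun w => s(v, w)) '' (G.neighborSet v \ {u}) := by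
    rintro _ ⟨he, a, ha, b, hb, rfl⟩
    simp only [Set.mem_compl_iff, Set.mem_insert_iff, Set.mem_singleton_iff, not_or] at hb
    rcases ha with rfl | rfl
    · exact .inl ⟨b, ⟨he, hb.2⟩, rfl⟩
    · exact .inr ⟨b, ⟨he, hb.1⟩, rfl⟩
  have hu := Set.ncard_sdiff_singleton_add_one (s := G.neighborSet u) huv
  have hv := Set.ncard_sdiff_singleton_add_one (s := G.neighborSet v) huv.symm
  have := (Set.ncard_le_ncard hsub).trans (Set.ncard_union_le _ _)
  have := Set.ncard_image_le (f := fun w => s(u, w)) (s := G.neighborSet u \ {v}) (Set.toFinite _)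
  have := Set.ncard_image_le (f := fun w => s(v, w)) (s := G.neighborSet v \ {u}) (Set.toFinite _)
  omega

lemma SimpleGraph.Connected.exists_two_le_ncard_neighborSet [Finite V] (hG : G.Connected)
    (hV : 3 ≤ Nat.card V) : ∃ v, 2 ≤ (G.neighborSet v).ncard := by
  have compl_nonempty (X : Set V) (hX : X.ncard ≤ 2) : Xᶜ.Nonempty := by
    rw [← Set.ncard_pos, Set.ncard_compl]
    omega
  obtain ⟨u⟩ := hG.nonempty
  obtain ⟨u, rfl, w, -, huw⟩ := hG.exists_adj_mem_notMem (X := {u}) ⟨u, rfl⟩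
    (compl_nonempty _ (by simp))
  obtain ⟨a, ha, b, hb, hab⟩ := hG.exists_adj_mem_notMem (X := {u, w}) ⟨u, .inl rfl⟩
    (compl_nonempty _ ((Set.ncard_insert_le _ _).trans (by simp)))
  simp only [Set.mem_insert_iff, Set.mem_singleton_iff, not_or] at hb
  rcases ha with rfl | rfl
  · exact ⟨a, (Set.ncard_pair (Ne.symm hb.2)).symm.le.trans
      (Set.ncard_le_ncard (Set.pair_subset huw hab))⟩
  · exact ⟨a, (Set.ncard_pair (Ne.symm hb.1)).symm.le.trans
      (Set.ncard_le_ncard (Set.pair_subset huw.symm hab))⟩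

end Cuts

section RestrictedSide

variable {V : Type*} {G : SimpleGraph V} {X : Set V}

/-- The sides `X` of the restricted edge-cuts of the form `edgeBoundary G X`. -/
structure IsRestrictedSide (G : SimpleGraph V) (X : Set V) : Prop where
  nonempty : X.Nonempty
  compl_nonempty : Xᶜ.Nonempty
  exists_adj_mem_iff (v : V) : ∃ w, G.Adj v w ∧ (w ∈ X ↔ v ∈ X)

lemma IsRestrictedSide.compl (hX : IsRestrictedSide G X) : IsRestrictedSide G Xᶜ where
  nonempty := hX.compl_nonempty
  compl_nonempty := by simpa using hX.nonempty
  exists_adj_mem_iff v := by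
    obtain ⟨w, hvw, hw⟩ := hX.exists_adj_mem_iff v
    exact ⟨w, hvw, not_congr hw⟩

lemma IsRestrictedSide.isRestrictedEdgeCut (hX : IsRestrictedSide G X) :
    IsRestrictedEdgeCut G (edgeBoundary G X) := by
  refine ⟨fun _ he => he.1,
    not_connected_deleteEdges_edgeBoundary hX.nonempty hX.compl_nonempty, fun v => ?_⟩
  obtain ⟨w, hvw, hw⟩ := hX.exists_adj_mem_iff v
  refine ⟨w, SimpleGraph.deleteEdges_adj.2 ⟨hvw, ?_⟩⟩
  rintro ⟨-, a, ha, b, hb, hab⟩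
  rcases Sym2.eq_iff.1 hab with ⟨rfl, rfl⟩ | ⟨rfl, rfl⟩
  exacts [hb (hw.2 ha), hb (hw.1 ha)]

lemma IsRestrictedSide.restrictedEdgeConn_le (hX : IsRestrictedSide G X) :
    restrictedEdgeConn G ≤ (edgeBoundary G X).ncard :=
  Nat.sInf_le ⟨_, hX.isRestrictedEdgeCut, rfl⟩

lemma IsRestrictedEdgeCut.exists_isRestrictedSide [Nonempty V] {F : Set (Sym2 V)}
    (hF : IsRestrictedEdgeCut G F) : ∃ X, IsRestrictedSide G X ∧ edgeBoundary G X ⊆ F := by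
  obtain ⟨X, hX, hXc, hXF⟩ := exists_edgeBoundary_subset_of_not_connected hF.2.1
  refine ⟨X, ⟨hX, hXc, fun v => ?_⟩, hXF⟩
  obtain ⟨w, hvw⟩ := hF.2.2 v
  rw [SimpleGraph.deleteEdges_adj] at hvw
  refine ⟨w, hvw.1, ?_⟩
  by_contra hne
  refine hvw.2 (hXF ⟨hvw.1, ?_⟩)
  by_cases hv : v ∈ X
  · exact ⟨v, hv, w, fun hw => hne (iff_of_true hw hv), rfl⟩
  · exact ⟨w, not_not.1 fun hw => hne (iff_of_false hw hv), v, hv, Sym2.eq_swap⟩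

lemma le_restrictedEdgeConn [Finite V] [Nonempty V] {m : ℕ} {X₀ : Set V}
    (hX₀ : IsRestrictedSide G X₀)
    (h : ∀ X, IsRestrictedSide G X → m ≤ (edgeBoundary G X).ncard) :
    m ≤ restrictedEdgeConn G :=
  le_csInf ⟨_, _, hX₀.isRestrictedEdgeCut, rfl⟩ fun _ ⟨_, hF, hk⟩ => by
    obtain ⟨X, hX, hXF⟩ := hF.exists_isRestrictedSide
    exact hk ▸ (h X hX).trans (Set.ncard_le_ncard hXF)

lemma isRestrictedSide_pair [Finite V] (hdeg : ∀ w, 3 ≤ (G.neighborSet w).ncard) {u v : V}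
    (huv : G.Adj u v) : IsRestrictedSide G {u, v} := by
  have hout (w : V) : ∃ z ∈ G.neighborSet w, z ∉ ({u, v} : Set V) :=
    Set.exists_mem_notMem_of_ncard_lt_ncard <|
      (Set.ncard_insert_le _ _).trans_lt (by rw [Set.ncard_singleton]; linarith [hdeg w])
  refine ⟨⟨u, .inl rfl⟩, (hout u).elim fun z hz => ⟨z, hz.2⟩, fun w => ?_⟩
  by_cases hw : w ∈ ({u, v} : Set V)
  · rcases hw with rfl | rfl
    · exact ⟨v, huv, by simp⟩
    · exact ⟨u, huv.symm, by simp⟩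
  · obtain ⟨z, hz, hz'⟩ := hout w
    exact ⟨z, hz, iff_of_false hz' hw⟩

lemma restrictedEdgeConn_add_two_le [Finite V] (hdeg : ∀ w, 3 ≤ (G.neighborSet w).ncard)
    {u v : V} (huv : G.Adj u v) :
    restrictedEdgeConn G + 2 ≤ (G.neighborSet u).ncard + (G.neighborSet v).ncard :=
  (Nat.add_le_add_right (isRestrictedSide_pair hdeg huv).restrictedEdgeConn_le 2).trans
    (ncard_edgeBoundary_pair_add_two_le huv)

end RestrictedSide

section VertexConn

variable {V : Type*} {G : SimpleGraph V} {T A B : Set V}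

def edgesBetween (G : SimpleGraph V) (A B : Set V) : Set (Sym2 V) :=
  {e ∈ G.edgeSet | ∃ a ∈ A, ∃ b ∈ B, e = s(a, b)}

lemma vertexConn_le_ncard (S : Set V) (hS : ¬(G.induce Sᶜ).Connected ∨ Sᶜ.ncard ≤ 1) :
    vertexConn G ≤ S.ncard :=
  Nat.sInf_le ⟨S, rfl, hS⟩

/-- Whitney's argument, first case: removing `T` and one endpoint (other than `a₀`, `b₀`) of
every edge between `A` and `B` separates `a₀` from `b₀`. -/
lemma vertexConn_le_of_not_adj [Finite V] (hAB : Disjoint A B) (hunion : A ∪ B = Tᶜ)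
    {a₀ b₀ : V} (ha₀ : a₀ ∈ A) (hb₀ : b₀ ∈ B) (hne : ¬G.Adj a₀ b₀) :
    vertexConn G ≤ T.ncard + (edgesBetween G A B).ncard := by
  have hend : ∀ e ∈ edgesBetween G A B, ∃ w ∈ e, w ≠ a₀ ∧ w ≠ b₀ := by
    rintro _ ⟨he, a, ha, b, hb, rfl⟩
    by_cases ha' : a = a₀
    · subst ha'
      exact ⟨b, Sym2.mem_mk_right _ _, hAB.ne_of_mem ha hb ∘ Eq.symm,
        fun h => hne (h ▸ he)⟩
    · exact ⟨a, Sym2.mem_mk_left _ _, ha', hAB.ne_of_mem ha hb₀⟩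
  have : Nonempty V := ⟨a₀⟩
  choose! c hc using hend
  set S := T ∪ c '' edgesBetween G A B
  have hT : ∀ v ∈ A ∪ B, v ∉ T := fun v hv => by rwa [hunion] at hv
  refine (vertexConn_le_ncard S (.inl fun hconn => ?_)).trans <| (Set.ncard_union_le _ _).trans <|
    Nat.add_le_add_left (Set.ncard_image_le (Set.toFinite _)) _
  have hcS : ∀ v ∈ A ∪ B, (∀ e ∈ edgesBetween G A B, c e ≠ v) → v ∈ Sᶜ := by
    rintro v hv hcv (hvT | ⟨e, he, rfl⟩)
    exacts [hT v hv hvT, hcv e he rfl]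
  have ha₀S := hcS a₀ (.inl ha₀) fun e he => (hc e he).2.1
  have hb₀S := hcS b₀ (.inr hb₀) fun e he => (hc e he).2.2
  obtain ⟨w₁, hw₁, w₂, hw₂, hw⟩ :=
    hconn.exists_adj_mem_notMem (X := {w : ↥Sᶜ | w.1 ∈ A}) ⟨⟨a₀, ha₀S⟩, ha₀⟩
      ⟨⟨b₀, hb₀S⟩, Set.disjoint_right.1 hAB hb₀⟩
  have hw₂B : w₂.1 ∈ B :=
    ((hunion.symm ▸ fun h => w₂.2 (.inl h) : w₂.1 ∈ A ∪ B)).resolve_left hw₂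
  have he : s(w₁.1, w₂.1) ∈ edgesBetween G A B :=
    ⟨SimpleGraph.induce_adj.1 hw, w₁.1, hw₁, w₂.1, hw₂B, rfl⟩
  rcases Sym2.mem_iff.1 (hc _ he).1 with h | h
  exacts [w₁.2 (.inr ⟨_, he, h⟩), w₂.2 (.inr ⟨_, he, h⟩)]

/-- Whitney's argument, second case: now `|E(A, B)| = |A| |B| ≥ |A| + |B| - 1`, so it suffices to
delete all vertices but one. -/
lemma vertexConn_le_of_forall_adj [Finite V] (hAB : Disjoint A B) (hunion : A ∪ B = Tᶜ)
    (hA : A.Nonempty) (hB : B.Nonempty) (hadj : ∀ a ∈ A, ∀ b ∈ B, G.Adj a b) :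
    vertexConn G ≤ T.ncard + (edgesBetween G A B).ncard := by
  obtain ⟨a₀, ha₀⟩ := hA
  have hprod : A.ncard * B.ncard ≤ (edgesBetween G A B).ncard := by
    rw [← Set.ncard_prod]
    refine Set.ncard_le_ncard_of_injOn (fun p => s(p.1, p.2))
      (fun p hp => ⟨hadj _ hp.1 _ hp.2, p.1, hp.1, p.2, hp.2, rfl⟩) ?_
    rintro ⟨a, b⟩ ⟨ha, hb⟩ ⟨a', b'⟩ ⟨ha', hb'⟩ h
    rcases Sym2.eq_iff.1 h with ⟨rfl, rfl⟩ | ⟨rfl, rfl⟩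
    · rfl
    · exact (Set.disjoint_left.1 hAB ha hb').elim
  have hcover : {a₀}ᶜ ⊆ T ∪ (A \ {a₀}) ∪ B := by
    intro v hv
    by_cases hvT : v ∈ T
    · exact .inl (.inl hvT)
    rcases (hunion.symm ▸ hvT : v ∈ A ∪ B) with h | h
    exacts [.inl (.inr ⟨h, hv⟩), .inr h]
  have hA := Set.ncard_sdiff_singleton_add_one ha₀
  have hB := (Set.ncard_pos (s := B)).2 hB
  have := (Set.ncard_le_ncard hcover).trans <| (Set.ncard_union_le _ _).trans <|
    Nat.add_le_add_right (Set.ncard_union_le _ _) _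
  refine (vertexConn_le_ncard {a₀}ᶜ (.inr (by simp))).trans ?_
  nlinarith

lemma vertexConn_le_ncard_add_ncard_edgesBetween [Finite V] (hAB : Disjoint A B)
    (hunion : A ∪ B = Tᶜ) (hA : A.Nonempty) (hB : B.Nonempty) :
    vertexConn G ≤ T.ncard + (edgesBetween G A B).ncard := by
  by_cases h : ∃ a ∈ A, ∃ b ∈ B, ¬G.Adj a b
  · obtain ⟨a, ha, b, hb, hne⟩ := h
    exact vertexConn_le_of_not_adj hAB hunion ha hb hne
  · push Not at h
    exact vertexConn_le_of_forall_adj hAB hunion hA hB h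

end VertexConn

section ReplacementProduct

variable {V1 V2 : Type*} {G1 : SimpleGraph V1} {G2 : SimpleGraph V2} {ℓ : V1 → V2 → V1}

lemma IsRPLabelling.range_eq_neighborSet [Finite V1] [Fintype V2] (hℓ : IsRPLabelling G1 ℓ)
    {x : V1} (hx : (G1.neighborSet x).ncard = Fintype.card V2) :
    Set.range (ℓ x) = G1.neighborSet x :=
  Set.eq_of_subset_of_ncard_le (Set.range_subset_iff.2 (hℓ.2 x)) <| by
    rw [hx, ← Set.image_univ, Set.ncard_image_of_injective _ (hℓ.1 x), Set.ncard_univ,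
      Nat.card_eq_fintype_card]

lemma replacementProduct_adj_of_fst_ne {p q : V1 × V2}
    (h : (replacementProduct G1 G2 ℓ).Adj p q) (hpq : p.1 ≠ q.1) :
    G1.Adj p.1 q.1 ∧ ℓ p.1 p.2 = q.1 ∧ ℓ q.1 q.2 = p.1 :=
  h.resolve_left fun h' => hpq h'.1

lemma exists_replacementProduct_adj_of_adj (hrange : ∀ x, Set.range (ℓ x) = G1.neighborSet x)
    {a b : V1} (hab : G1.Adj a b) : ∃ i j, (replacementProduct G1 G2 ℓ).Adj (a, i) (b, j) := by
  obtain ⟨i, hi⟩ := (hrange a).ge hab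
  obtain ⟨j, hj⟩ := (hrange b).ge hab.symm
  exact ⟨i, j, .inr ⟨hab, hi, hj⟩⟩

lemma exists_replacementProduct_adj_fst_ne (hrange : ∀ x, Set.range (ℓ x) = G1.neighborSet x)
    (p : V1 × V2) : ∃ q, (replacementProduct G1 G2 ℓ).Adj p q ∧ p.1 ≠ q.1 := by
  have hadj : G1.Adj p.1 (ℓ p.1 p.2) := (hrange p.1).le ⟨p.2, rfl⟩
  obtain ⟨k, hk⟩ := (hrange _).ge hadj.symm
  exact ⟨(ℓ p.1 p.2, k), .inr ⟨hadj, rfl, hk⟩, hadj.ne⟩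

lemma eq_of_replacementProduct_adj_of_fst_ne (hinj : ∀ x, Function.Injective (ℓ x))
    {p q q' : V1 × V2} (hq : (replacementProduct G1 G2 ℓ).Adj p q)
    (hq' : (replacementProduct G1 G2 ℓ).Adj p q') (hpq : p.1 ≠ q.1) (hpq' : p.1 ≠ q'.1) :
    q = q' := by
  obtain ⟨-, hpq, hqp⟩ := replacementProduct_adj_of_fst_ne hq hpq
  obtain ⟨-, hpq', hqp'⟩ := replacementProduct_adj_of_fst_ne hq' hpq'
  have h1 : q.1 = q'.1 := hpq.symm.trans hpq'
  exact Prod.ext h1 (hinj q.1 (hqp.trans (hqp'.symm.trans (by rw [h1]))))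

lemma replacementProduct_neighborSet (hinj : ∀ x, Function.Injective (ℓ x)) {p q : V1 × V2}
    (hq : (replacementProduct G1 G2 ℓ).Adj p q) (hpq : p.1 ≠ q.1) :
    (replacementProduct G1 G2 ℓ).neighborSet p =
      insert q (Prod.mk p.1 '' G2.neighborSet p.2) := by
  ext r
  constructor
  · intro hr
    by_cases h : p.1 = r.1
    · exact .inr ⟨r.2, (hr.resolve_right fun h' => h'.1.ne h).2, Prod.ext h rfl⟩
    · exact .inl (eq_of_replacementProduct_adj_of_fst_ne hinj hr hq h hpq)
  · rintro (rfl | ⟨j, hj, rfl⟩)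
    exacts [hq, .inl ⟨rfl, hj⟩]

lemma ncard_neighborSet_replacementProduct [Finite V2] (hinj : ∀ x, Function.Injective (ℓ x))
    (hrange : ∀ x, Set.range (ℓ x) = G1.neighborSet x) (p : V1 × V2) :
    ((replacementProduct G1 G2 ℓ).neighborSet p).ncard = (G2.neighborSet p.2).ncard + 1 := by
  obtain ⟨q, hq, hpq⟩ := exists_replacementProduct_adj_fst_ne hrange p
  rw [replacementProduct_neighborSet hinj hq hpq, Set.ncard_insert_of_notMem,
    Set.ncard_image_of_injective _ (Prod.mk_right_injective p.1)]
  rintro ⟨j, -, rfl⟩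
  exact hpq rfl

lemma ncard_edgeBoundary_preimage_fst_le [Finite V1] (hinj : ∀ x, Function.Injective (ℓ x))
    (Y : Set V1) :
    (edgeBoundary (replacementProduct G1 G2 ℓ) (Prod.fst ⁻¹' Y)).ncard ≤
      (edgeBoundary G1 Y).ncard := by
  have hcross {p q : V1 × V2} (hpq : (replacementProduct G1 G2 ℓ).Adj p q) (hp : p.1 ∈ Y)
      (hq : q.1 ∉ Y) : G1.Adj p.1 q.1 ∧ ℓ p.1 p.2 = q.1 ∧ ℓ q.1 q.2 = p.1 :=
    replacementProduct_adj_of_fst_ne hpq (ne_of_mem_of_not_mem hp hq)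
  refine Set.ncard_le_ncard_of_injOn (Sym2.map Prod.fst) ?_ ?_
  · rintro _ ⟨hpq, p, hp, q, hq, rfl⟩
    exact ⟨(hcross hpq hp hq).1, p.1, hp, q.1, hq, rfl⟩
  · rintro _ ⟨hpq, p, hp, q, hq, rfl⟩ _ ⟨hpq', p', hp', q', hq', rfl⟩ h
    obtain ⟨-, hpq1, hqp1⟩ := hcross hpq hp hq
    obtain ⟨-, hpq1', hqp1'⟩ := hcross hpq' hp' hq'
    obtain ⟨hp1, hq1⟩ : p.1 = p'.1 ∧ q.1 = q'.1 := by
      rcases Sym2.eq_iff.1 h with h | ⟨h, -⟩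
      exacts [h, (ne_of_mem_of_not_mem (s := Y) hp hq' h).elim]
    have hp2 : p.2 = p'.2 := hinj p.1 (by rw [hpq1, hq1, ← hpq1', hp1])
    have hq2 : q.2 = q'.2 := hinj q.1 (by rw [hqp1, hp1, ← hqp1', hq1])
    rw [Prod.ext hp1 hp2, Prod.ext hq1 hq2]

lemma restrictedEdgeConn_replacementProduct_le_edgeConn [Finite V1] [Nonempty V1]
    [Nonempty V2] (hinj : ∀ x, Function.Injective (ℓ x))
    (hrange : ∀ x, Set.range (ℓ x) = G1.neighborSet x)
    (hG2 : ∀ i, (G2.neighborSet i).Nonempty) :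
    restrictedEdgeConn (replacementProduct G1 G2 ℓ) ≤ edgeConn G1 := by
  obtain ⟨x⟩ := ‹Nonempty V1›
  obtain ⟨i⟩ := ‹Nonempty V2›
  have : Nontrivial V1 := nontrivial_of_ne _ _ ((hrange x).le ⟨i, rfl⟩ : G1.Adj x (ℓ x i)).ne
  obtain ⟨Y, ⟨y, hy⟩, ⟨z, hz⟩, hY⟩ := exists_ncard_edgeBoundary_le_edgeConn (G := G1)
  have hside : IsRestrictedSide (replacementProduct G1 G2 ℓ) (Prod.fst ⁻¹' Y) :=
    ⟨⟨(y, i), hy⟩, ⟨(z, i), hz⟩,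
      fun p => (hG2 p.2).elim fun j hj => ⟨(p.1, j), .inl ⟨rfl, hj⟩, Iff.rfl⟩⟩
  exact hside.restrictedEdgeConn_le.trans ((ncard_edgeBoundary_preimage_fst_le hinj Y).trans hY)

end ReplacementProduct

section LowerBound

variable {V1 V2 : Type*} {G1 : SimpleGraph V1} {G2 : SimpleGraph V2} {ℓ : V1 → V2 → V1}
  {X : Set (V1 × V2)}

lemma image_map_mk_edgeBoundary_subset (x : V1) :
    Sym2.map (Prod.mk x) '' edgeBoundary G2 (Prod.mk x ⁻¹' X) ⊆
      edgeBoundary (replacementProduct G1 G2 ℓ) X := by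
  rintro _ ⟨_, ⟨hij, i, hi, j, hj, rfl⟩, rfl⟩
  exact ⟨.inl ⟨rfl, hij⟩, (x, i), hi, (x, j), hj, rfl⟩

lemma edgeConn_le_ncard_image_map_mk {x : V1} (h₁ : (Prod.mk x ⁻¹' X).Nonempty)
    (h₂ : (Prod.mk x ⁻¹' X)ᶜ.Nonempty) :
    edgeConn G2 ≤ (Sym2.map (Prod.mk x) '' edgeBoundary G2 (Prod.mk x ⁻¹' X)).ncard := by
  rw [Set.ncard_image_of_injective _ (Sym2.map.injective (Prod.mk_right_injective x))]
  exact edgeConn_le_ncard_edgeBoundary h₁ h₂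

lemma disjoint_image_map_mk_of_ne {x x' : V1} (hx : x ≠ x') (s s' : Set (Sym2 V2)) :
    Disjoint (Sym2.map (Prod.mk x) '' s) (Sym2.map (Prod.mk x') '' s') := by
  refine Set.disjoint_left.2 ?_
  rintro _ ⟨e, -, rfl⟩ ⟨e', -, he⟩
  induction e using Sym2.ind
  induction e' using Sym2.ind
  simp only [Sym2.map_mk, Sym2.eq_iff, Prod.mk.injEq] at he
  exact hx (he.elim (·.1.1.symm) (·.1.1.symm))

lemma disjoint_image_map_mk_setOf_not_isDiag (x : V1) (s : Set (Sym2 V2))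
    (t : Set (Sym2 (V1 × V2))) :
    Disjoint (Sym2.map (Prod.mk x) '' s) {e ∈ t | ¬(Sym2.map Prod.fst e).IsDiag} := by
  refine Set.disjoint_left.2 ?_
  rintro _ ⟨e, -, rfl⟩ ⟨-, he⟩
  induction e using Sym2.ind
  exact he rfl

lemma ncard_edgesBetween_le (hrange : ∀ x, Set.range (ℓ x) = G1.neighborSet x) [Finite V1]
    [Finite V2] {A B : Set V1} (hAX : ∀ p : V1 × V2, p.1 ∈ A → p ∈ X)
    (hBX : ∀ p : V1 × V2, p.1 ∈ B → p ∉ X) :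
    (edgesBetween G1 A B).ncard ≤ {e ∈ edgeBoundary (replacementProduct G1 G2 ℓ) X |
      ¬(Sym2.map Prod.fst e).IsDiag}.ncard := by
  refine (Set.ncard_le_ncard ?_).trans
    (Set.ncard_image_le (f := Sym2.map Prod.fst) (Set.toFinite _))
  rintro _ ⟨hab, a, ha, b, hb, rfl⟩
  obtain ⟨i, j, hij⟩ := exists_replacementProduct_adj_of_adj hrange hab
  exact ⟨s((a, i), (b, j)), ⟨⟨hij, (a, i), hAX _ ha, (b, j), hBX _ hb, rfl⟩,
    by simpa using hab.ne⟩, rfl⟩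

lemma edgeConn_le_ncard_edgeBoundary_of_forall_fiber [Finite V1] [Finite V2]
    (hrange : ∀ x, Set.range (ℓ x) = G1.neighborSet x) (hX : X.Nonempty) (hXc : Xᶜ.Nonempty)
    (hfull : ∀ x, (∀ i, (x, i) ∈ X) ∨ ∀ i, (x, i) ∉ X) :
    edgeConn G1 ≤ (edgeBoundary (replacementProduct G1 G2 ℓ) X).ncard := by
  set Y := {x | ∀ i, (x, i) ∈ X}
  obtain ⟨p, hp⟩ := hX
  obtain ⟨q, hq⟩ := hXc
  calc edgeConn G1 ≤ (edgeBoundary G1 Y).ncard :=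
        edgeConn_le_ncard_edgeBoundary ⟨p.1, (hfull p.1).resolve_right fun h => h p.2 hp⟩
          ⟨q.1, fun h => hq (h q.2)⟩
    _ ≤ _ := ncard_edgesBetween_le hrange (fun p hp => hp p.2)
          (fun p hp => (hfull p.1).resolve_left hp p.2)
    _ ≤ _ := Set.ncard_le_ncard (Set.sep_subset _ _)

lemma two_mul_edgeConn_le_ncard_edgeBoundary [Finite V1] [Finite V2] {x x' : V1}
    (hx : x ≠ x')
    (h₁ : (Prod.mk x ⁻¹' X).Nonempty) (h₂ : (Prod.mk x ⁻¹' X)ᶜ.Nonempty)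
    (h₁' : (Prod.mk x' ⁻¹' X).Nonempty) (h₂' : (Prod.mk x' ⁻¹' X)ᶜ.Nonempty) :
    2 * edgeConn G2 ≤ (edgeBoundary (replacementProduct G1 G2 ℓ) X).ncard := by
  have := Set.ncard_add_ncard_le_of_disjoint (u := edgeBoundary (replacementProduct G1 G2 ℓ) X)
    (disjoint_image_map_mk_of_ne hx _ _) (image_map_mk_edgeBoundary_subset x)
    (image_map_mk_edgeBoundary_subset x')
  have := edgeConn_le_ncard_image_map_mk (G2 := G2) h₁ h₂
  have := edgeConn_le_ncard_image_map_mk (G2 := G2) h₁' h₂'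
  omega

lemma vertexConn_add_edgeConn_le_ncard_edgeBoundary_add_one [Finite V1] [Finite V2]
    (hrange : ∀ x, Set.range (ℓ x) = G1.neighborSet x) {x : V1} {A B : Set V1}
    (h₁ : (Prod.mk x ⁻¹' X).Nonempty) (h₂ : (Prod.mk x ⁻¹' X)ᶜ.Nonempty)
    (hA : A.Nonempty) (hB : B.Nonempty) (hAX : ∀ p : V1 × V2, p.1 ∈ A → p ∈ X)
    (hBX : ∀ p : V1 × V2, p.1 ∈ B → p ∉ X) (hunion : A ∪ B = {x}ᶜ) :
    vertexConn G1 + edgeConn G2 ≤ (edgeBoundary (replacementProduct G1 G2 ℓ) X).ncard + 1 := by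
  have hAB : Disjoint A B := Set.disjoint_left.2 fun a ha hb =>
    h₁.elim fun i _ => hBX (a, i) hb (hAX (a, i) ha)
  have hκ := vertexConn_le_ncard_add_ncard_edgesBetween (G := G1) hAB hunion hA hB
  rw [Set.ncard_singleton] at hκ
  have := ncard_edgesBetween_le (G2 := G2) hrange hAX hBX
  have := Set.ncard_add_ncard_le_of_disjoint (u := edgeBoundary (replacementProduct G1 G2 ℓ) X)
    (disjoint_image_map_mk_setOf_not_isDiag x _ _)
    (image_map_mk_edgeBoundary_subset x) (Set.sep_subset _ _)
  have := edgeConn_le_ncard_image_map_mk (G2 := G2) h₁ h₂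
  omega

lemma min_le_ncard_edgeBoundary_of_subset_fiber [Finite V1] [Finite V2]
    (hrange : ∀ x, Set.range (ℓ x) = G1.neighborSet x)
    (hX : IsRestrictedSide (replacementProduct G1 G2 ℓ) X) {x : V1} (hXx : ∀ p ∈ X, p.1 = x)
    (h₂ : (Prod.mk x ⁻¹' X)ᶜ.Nonempty) :
    min (2 * edgeConn G2) (restrictedEdgeConn G2 + 2) ≤
      (edgeBoundary (replacementProduct G1 G2 ℓ) X).ncard := by
  set S := Prod.mk x ⁻¹' X
  -- every vertex of `X` has its own edge to another copy, and that edge leaves `X`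
  have hcross : S.ncard ≤ {e ∈ edgeBoundary (replacementProduct G1 G2 ℓ) X |
      ¬(Sym2.map Prod.fst e).IsDiag}.ncard := by
    choose c hc hcne using exists_replacementProduct_adj_fst_ne (G2 := G2) hrange
    refine Set.ncard_le_ncard_of_injOn (fun i => s((x, i), c (x, i)))
      (fun i hi => ⟨⟨hc _, (x, i), hi, c (x, i), fun h => hcne (x, i) (hXx _ h).symm, rfl⟩,
        by simpa using hcne (x, i)⟩) ?_
    intro i _ j _ h
    rcases Sym2.eq_iff.1 h with ⟨h, -⟩ | ⟨h, -⟩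
    exacts [Prod.mk_right_injective x h, (hcne (x, j) (congrArg Prod.fst h : x = _)).elim]
  have hsame : ∀ i ∈ S, ∃ j ∈ S, G2.Adj i j := by
    intro i hi
    obtain ⟨q, hq, hqX⟩ := hX.exists_adj_mem_iff (x, i)
    have hq₁ : q.1 = x := hXx q (hqX.2 hi)
    refine ⟨q.2, ?_, (hq.resolve_right fun h => h.1.ne hq₁.symm).2⟩
    simpa [S, ← hq₁] using hqX.2 hi
  obtain ⟨i₀, hi₀⟩ : S.Nonempty := by
    obtain ⟨p, hp⟩ := hX.nonempty
    exact ⟨p.2, by simpa [S, ← hXx p hp] using hp⟩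
  have hsum : (edgeBoundary G2 S).ncard + S.ncard ≤
      (edgeBoundary (replacementProduct G1 G2 ℓ) X).ncard := by
    rw [← Set.ncard_image_of_injective _ (Sym2.map.injective (Prod.mk_right_injective x))]
    exact (Nat.add_le_add_left hcross _).trans (Set.ncard_add_ncard_le_of_disjoint
      (disjoint_image_map_mk_setOf_not_isDiag x _ _) (image_map_mk_edgeBoundary_subset x)
      (Set.sep_subset _ _))
  by_cases hS : ∀ i, ∃ j, G2.Adj i j ∧ (j ∈ S ↔ i ∈ S)
  · have := IsRestrictedSide.restrictedEdgeConn_le ⟨⟨i₀, hi₀⟩, h₂, hS⟩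
    obtain ⟨j, hj, hij⟩ := hsame i₀ hi₀
    have := (Set.ncard_pair hij.ne).symm.le.trans (Set.ncard_le_ncard (Set.pair_subset hi₀ hj))
    omega
  · obtain ⟨i, hi⟩ := not_forall.1 hS
    have hiS : i ∉ S := fun hiS => by
      obtain ⟨j, hj, hij⟩ := hsame i hiS
      exact hi ⟨j, hij, iff_of_true hj hiS⟩
    have hN : G2.neighborSet i ⊆ S := fun j hij =>
      not_not.1 fun hj => hi ⟨j, hij, iff_of_false hj hiS⟩
    have : Nontrivial V2 := nontrivial_of_ne i i₀ (ne_of_mem_of_not_mem hi₀ hiS).symm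
    have := (edgeConn_le_ncard_neighborSet (G := G2) i).trans (Set.ncard_le_ncard hN)
    have := edgeConn_le_ncard_edgeBoundary (G := G2) ⟨i₀, hi₀⟩ h₂
    omega

lemma min_le_ncard_edgeBoundary_of_forall_ne_fiber [Finite V1] [Finite V2]
    (hrange : ∀ x, Set.range (ℓ x) = G1.neighborSet x)
    (hX : IsRestrictedSide (replacementProduct G1 G2 ℓ) X) {x : V1}
    (h₁ : (Prod.mk x ⁻¹' X).Nonempty) (h₂ : (Prod.mk x ⁻¹' X)ᶜ.Nonempty)
    (hfull : ∀ y ≠ x, (∀ i, (y, i) ∈ X) ∨ ∀ i, (y, i) ∉ X) :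
    min (vertexConn G1 + edgeConn G2 - 1)
        (min (2 * edgeConn G2) (restrictedEdgeConn G2 + 2)) ≤
      (edgeBoundary (replacementProduct G1 G2 ℓ) X).ncard := by
  set A := {y | y ≠ x ∧ ∀ i, (y, i) ∈ X}
  set B := {y | y ≠ x ∧ ∀ i, (y, i) ∉ X}
  by_cases hA : A.Nonempty
  · by_cases hB : B.Nonempty
    · have hunion : A ∪ B = {x}ᶜ := Set.ext fun y => ⟨fun h => h.elim And.left And.left,
        fun hy => (hfull y hy).imp (⟨hy, ·⟩) (⟨hy, ·⟩)⟩
      have : vertexConn G1 + edgeConn G2 ≤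
          (edgeBoundary (replacementProduct G1 G2 ℓ) X).ncard + 1 :=
        vertexConn_add_edgeConn_le_ncard_edgeBoundary_add_one hrange h₁ h₂ hA hB
          (fun p hp => hp.2 p.2) (fun p hp => hp.2 p.2) hunion
      omega
    · have hXx : ∀ p ∈ Xᶜ, p.1 = x := fun p hp => by
        by_contra hne
        exact (hfull p.1 hne).elim (fun h => hp (h p.2)) fun h => hB ⟨p.1, hne, h⟩
      obtain ⟨i, hi⟩ := h₁
      have :=
        min_le_ncard_edgeBoundary_of_subset_fiber hrange hX.compl hXx ⟨i, not_not_intro hi⟩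
      rw [edgeBoundary_compl] at this
      omega
  · have hXx : ∀ p ∈ X, p.1 = x := fun p hp => by
      by_contra hne
      exact (hfull p.1 hne).elim (fun h => hA ⟨p.1, hne, h⟩) fun h => h p.2 hp
    have := min_le_ncard_edgeBoundary_of_subset_fiber hrange hX hXx h₂
    omega

lemma min_le_ncard_edgeBoundary [Finite V1] [Finite V2]
    (hrange : ∀ x, Set.range (ℓ x) = G1.neighborSet x)
    (hX : IsRestrictedSide (replacementProduct G1 G2 ℓ) X) :
    min (min (edgeConn G1) (vertexConn G1 + edgeConn G2 - 1))
        (min (2 * edgeConn G2) (restrictedEdgeConn G2 + 2)) ≤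
      (edgeBoundary (replacementProduct G1 G2 ℓ) X).ncard := by
  by_cases hsplit : ∃ x, (∃ i, (x, i) ∈ X) ∧ ∃ i, (x, i) ∉ X
  · obtain ⟨x, h₁, h₂⟩ := hsplit
    by_cases hsplit' : ∃ x' ≠ x, (∃ i, (x', i) ∈ X) ∧ ∃ i, (x', i) ∉ X
    · obtain ⟨x', hx', h₁', h₂'⟩ := hsplit'
      have : 2 * edgeConn G2 ≤ (edgeBoundary (replacementProduct G1 G2 ℓ) X).ncard :=
        two_mul_edgeConn_le_ncard_edgeBoundary hx'.symm h₁ h₂ h₁' h₂'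
      omega
    · have := min_le_ncard_edgeBoundary_of_forall_ne_fiber hrange hX h₁ h₂ fun y hy => by
        by_contra! h
        exact hsplit' ⟨y, hy, h.2, h.1⟩
      omega
  · have : edgeConn G1 ≤ (edgeBoundary (replacementProduct G1 G2 ℓ) X).ncard :=
      edgeConn_le_ncard_edgeBoundary_of_forall_fiber hrange hX.nonempty hX.compl_nonempty
        fun x => by
          by_contra! h
          exact hsplit ⟨x, h.2, h.1⟩
    omega

end LowerBound

theorem restrictedEdgeConn_replacementProduct_bounds_general
    {V1 V2 : Type*} [Fintype V1] [Fintype V2] {δ1 δ2 : ℕ}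
    (G1 : SimpleGraph V1) (G2 : SimpleGraph V2) (ℓ : V1 → V2 → V1)
    (hℓ : IsRPLabelling G1 ℓ)
    (hc1 : G1.Connected) (hc2 : G2.Connected)
    (hr1 : ∀ x : V1, (G1.neighborSet x).ncard = δ1)
    (hr2 : ∀ i : V2, (G2.neighborSet i).ncard = δ2)
    (hd : Fintype.card V2 = δ1)
    (hδ1 : 4 ≤ δ1) :
    min (min (edgeConn G1) (vertexConn G1 + edgeConn G2 - 1))
        (min (2 * edgeConn G2) (restrictedEdgeConn G2 + 2))
      ≤ restrictedEdgeConn (replacementProduct G1 G2 ℓ) ∧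
    restrictedEdgeConn (replacementProduct G1 G2 ℓ) ≤ min (edgeConn G1) (2 * δ2) := by
  have hrange x : Set.range (ℓ x) = G1.neighborSet x :=
    hℓ.range_eq_neighborSet (by rw [hr1, hd])
  have : Nonempty V1 := hc1.nonempty
  have : Nonempty V2 := hc2.nonempty
  have hδ2 : 2 ≤ δ2 := by
    obtain ⟨j, hj⟩ :=
      hc2.exists_two_le_ncard_neighborSet (by rw [Nat.card_eq_fintype_card]; omega)
    exact hr2 j ▸ hj
  have hdeg p : ((replacementProduct G1 G2 ℓ).neighborSet p).ncard = δ2 + 1 := by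
    rw [ncard_neighborSet_replacementProduct hℓ.1 hrange, hr2]
  obtain ⟨q, hq, -⟩ :=
    exists_replacementProduct_adj_fst_ne (G2 := G2) hrange (Classical.arbitrary _)
  have hdeg3 p : 3 ≤ ((replacementProduct G1 G2 ℓ).neighborSet p).ncard := by
    rw [hdeg]
    omega
  refine ⟨le_restrictedEdgeConn (isRestrictedSide_pair hdeg3 hq)
    fun X hX => min_le_ncard_edgeBoundary hrange hX, le_min ?_ ?_⟩
  · exact restrictedEdgeConn_replacementProduct_le_edgeConn hℓ.1 hrange fun j =>
      Set.nonempty_of_ncard_ne_zero (by rw [hr2]; omega)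
  · have := restrictedEdgeConn_add_two_le hdeg3 hq
    rw [hdeg, hdeg] at this
    omega

/-- Theorem 4.4, bounds (4.7). If `G1` is a connected `δ1`-regular graph
on `n` vertices with `δ1 ≥ 4` and `G2` is a connected `δ2`-regular graph on `δ1` vertices,
then `min {λ1, κ1 + λ2 - 1, 2·λ2, λ2' + 2} ≤ λ'(G1 ® G2) ≤ min {λ1, 2·δ2}`. -/
theorem restrictedEdgeConn_replacementProduct_bounds
    {V1 V2 : Type*} [Fintype V1] [Fintype V2] {n δ1 δ2 : ℕ}
    (G1 : SimpleGraph V1) (G2 : SimpleGraph V2) (ℓ : V1 → V2 → V1)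
    (hℓ : IsRPLabelling G1 ℓ)
    (hc1 : G1.Connected) (hc2 : G2.Connected)
    (hr1 : ∀ x : V1, (G1.neighborSet x).ncard = δ1)
    (hr2 : ∀ i : V2, (G2.neighborSet i).ncard = δ2)
    (hn : Fintype.card V1 = n) (hd : Fintype.card V2 = δ1)
    (hδ1 : 4 ≤ δ1) :
    min (min (edgeConn G1) (vertexConn G1 + edgeConn G2 - 1))
        (min (2 * edgeConn G2) (restrictedEdgeConn G2 + 2))
      ≤ restrictedEdgeConn (replacementProduct G1 G2 ℓ) ∧
    restrictedEdgeConn (replacementProduct G1 G2 ℓ) ≤ min (edgeConn G1) (2 * δ2) :=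
  restrictedEdgeConn_replacementProduct_bounds_general G1 G2 ℓ hℓ hc1 hc2 hr1 hr2 hd hδ1
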